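/- Fix reals $a, b > 0$ and $c > 1$. Define $f(y) = (y/a)^{-y}(1-y/a)^{y-a}(y/b)^{-y}(1-y/b)^{y-b} c^{-y}$ for $y \in [0, \min(a,b)]$ (with $0^0=1$). Then $\log f$ is strictly concave on $[0, \min(a,b)]$ and there is a unique maximizer $y^*$ of $f$ on this interval, with $0 < y^* < \min(a,b)$, and $y^*$ satisfies $(a-y^*)(b-y^*) = c (y^*)^2$. -/

import Mathlib

/-!
In terms of `negMulLog x = -x log x` (whose value `0` at `0` matches `0 ^ 0 = 1`), `log f` is
`2 negMulLog y + negMulLog (a - y) + negMulLog (b - y)` plus an affine function of `y` on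
`[0, min a b]`, hence strictly concave. Its derivative `log ((a - y)(b - y) / (c y²))` vanishes at
a root of `(a - y)(b - y) = c y²`, which the intermediate value theorem places in `(0, min a b)`.
A critical point of a concave function is a maximum, and strict concavity makes the maximizer
unique.
-/

open Set

noncomputable def fLD (a b c y : ℝ) : ℝ :=
  (y / a) ^ (-y) * (1 - y / a) ^ (y - a) * (y / b) ^ (-y) * (1 - y / b) ^ (y - b) * c ^ (-y)

open Real

theorem ConcaveOn.isMaxOn_of_hasDerivAt_eq_zero {S : Set ℝ} {f : ℝ → ℝ} {x : ℝ}
    (hf : ConcaveOn ℝ S f) (hx : x ∈ interior S) (hfx : HasDerivAt f 0 x) : IsMaxOn f S x := by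
  have hmin : IsMinOn (-f) S x := hf.neg.isMinOn_of_rightDeriv_eq_zero hx <| by
    rw [hfx.neg.hasDerivWithinAt.derivWithin (uniqueDiffWithinAt_Ioi x), neg_zero]
  simpa using hmin.neg

theorem ConcaveOn.comp_const_sub {S : Set ℝ} {f : ℝ → ℝ} (hf : ConcaveOn ℝ S f) (a : ℝ) :
    ConcaveOn ℝ ((a - ·) ⁻¹' S) (fun y => f (a - y)) :=
  hf.comp_affineMap (AffineMap.const ℝ ℝ a - AffineMap.id ℝ ℝ)

lemma div_rpow_neg_self_eq_exp {a x : ℝ} (ha : 0 < a) (hx : 0 ≤ x) :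
    (x / a) ^ (-x) = exp (negMulLog x + x * log a) := by
  rcases hx.eq_or_lt with rfl | hx
  · simp
  rw [rpow_def_of_pos (div_pos hx ha), log_div hx.ne' ha.ne', negMulLog]
  ring_nf

noncomputable def logFLD (a b c y : ℝ) : ℝ :=
  2 * negMulLog y + negMulLog (a - y) + negMulLog (b - y) + a * log a + b * log b - y * log c

section

variable {a b c y : ℝ}

lemma fLD_eq_exp_logFLD (ha : 0 < a) (hb : 0 < b) (hc : 0 < c) (hy : y ∈ Icc 0 (min a b)) :
    fLD a b c y = exp (logFLD a b c y) := by
  have hya : 0 ≤ a - y := sub_nonneg.2 (hy.2.trans (min_le_left a b))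
  have hyb : 0 ≤ b - y := sub_nonneg.2 (hy.2.trans (min_le_right a b))
  rw [fLD, one_sub_div ha.ne', one_sub_div hb.ne', ← neg_sub a y, ← neg_sub b y,
    div_rpow_neg_self_eq_exp ha hy.1, div_rpow_neg_self_eq_exp ha hya,
    div_rpow_neg_self_eq_exp hb hy.1, div_rpow_neg_self_eq_exp hb hyb, rpow_def_of_pos hc,
    ← exp_add, ← exp_add, ← exp_add, ← exp_add, logFLD, negMulLog, negMulLog]
  ring_nf

lemma isMaxOn_fLD_iff (ha : 0 < a) (hb : 0 < b) (hc : 0 < c) (hy : y ∈ Icc 0 (min a b)) :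
    IsMaxOn (fLD a b c) (Icc 0 (min a b)) y ↔ IsMaxOn (logFLD a b c) (Icc 0 (min a b)) y := by
  simp only [isMaxOn_iff]
  refine forall₂_congr fun z hz => ?_
  rw [fLD_eq_exp_logFLD ha hb hc hz, fLD_eq_exp_logFLD ha hb hc hy, exp_le_exp]

lemma strictConcaveOn_logFLD : StrictConcaveOn ℝ (Icc 0 (min a b)) (logFLD a b c) := by
  have hS : Convex ℝ (Icc 0 (min a b)) := convex_Icc _ _
  have hy := strictConcaveOn_negMulLog.subset Icc_subset_Ici_self hS
  have hay := (concaveOn_negMulLog.comp_const_sub a).subset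
    (fun y hy => sub_nonneg.2 (hy.2.trans (min_le_left a b))) hS
  have hby := (concaveOn_negMulLog.comp_const_sub b).subset
    (fun y hy => sub_nonneg.2 (hy.2.trans (min_le_right a b))) hS
  have hlin := (concaveOn_const (a * log a + b * log b) hS).sub
    ((LinearMap.mulRight ℝ (log c)).convexOn hS)
  refine ((((hy.add hy).add_concaveOn hay).add_concaveOn hby).add_concaveOn hlin).congr ?_
  intro y _
  simp only [logFLD, Pi.add_apply, Pi.sub_apply, LinearMap.mulRight_apply]
  ring

lemma hasDerivAt_logFLD (hc : 0 < c) (hy : y ∈ Ioo 0 (min a b)) :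
    HasDerivAt (logFLD a b c) (log ((a - y) * (b - y)) - log (c * y ^ 2)) y := by
  have hya : 0 < a - y := sub_pos.2 (hy.2.trans_le (min_le_left a b))
  have hyb : 0 < b - y := sub_pos.2 (hy.2.trans_le (min_le_right a b))
  have ha := (hasDerivAt_negMulLog hya.ne').comp y ((hasDerivAt_id y).const_sub a)
  have hb := (hasDerivAt_negMulLog hyb.ne').comp y ((hasDerivAt_id y).const_sub b)
  have h := (((((hasDerivAt_negMulLog hy.1.ne').const_mul 2).add ha).add hb).add_const
    (a * log a)).add_const (b * log b) |>.sub ((hasDerivAt_id y).mul_const (log c))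
  refine (show HasDerivAt (logFLD a b c) _ y from h).congr_deriv ?_
  rw [log_mul hya.ne' hyb.ne', log_mul hc.ne' (pow_ne_zero 2 hy.1.ne'), log_pow]
  push_cast
  ring

lemma exists_mem_Ioo_sub_mul_sub_eq (ha : 0 < a) (hb : 0 < b) (hc : 0 < c) :
    ∃ y ∈ Ioo 0 (min a b), (a - y) * (b - y) = c * y ^ 2 := by
  have hcont : ContinuousOn (fun y => (a - y) * (b - y) - c * y ^ 2) (Icc 0 (min a b)) := by
    fun_prop
  have hend : (a - min a b) * (b - min a b) = 0 := by
    rcases min_choice a b with h | h <;> simp [h]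
  have h0 : (0 : ℝ) ∈
      Ioo ((a - min a b) * (b - min a b) - c * min a b ^ 2) ((a - 0) * (b - 0) - c * 0 ^ 2) := by
    constructor <;> nlinarith [mul_pos hc (pow_pos (lt_min ha hb) 2), mul_pos ha hb]
  obtain ⟨y, hy, hy0⟩ := intermediate_value_Ioo' (lt_min ha hb).le hcont h0
  exact ⟨y, hy, sub_eq_zero.1 hy0⟩

end

theorem fLD_log_concave_unique_max (a b c : ℝ) (ha : 0 < a) (hb : 0 < b) (hc : 1 < c) :
    StrictConcaveOn ℝ (Icc 0 (min a b)) (fun y => Real.log (fLD a b c y)) ∧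
    ∃! ystar : ℝ, ystar ∈ Icc 0 (min a b) ∧
      (∀ y ∈ Icc 0 (min a b), fLD a b c y ≤ fLD a b c ystar) ∧
      0 < ystar ∧ ystar < min a b ∧
      (a - ystar) * (b - ystar) = c * ystar ^ 2 := by
  have hc0 : 0 < c := zero_lt_one.trans hc
  have hconc : StrictConcaveOn ℝ (Icc 0 (min a b)) (logFLD a b c) := strictConcaveOn_logFLD
  obtain ⟨y₀, hy₀, hroot⟩ := exists_mem_Ioo_sub_mul_sub_eq ha hb hc0
  have hy₀S := Ioo_subset_Icc_self hy₀
  have hmax : IsMaxOn (logFLD a b c) (Icc 0 (min a b)) y₀ :=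
    hconc.concaveOn.isMaxOn_of_hasDerivAt_eq_zero (by rwa [interior_Icc])
      (by simpa [hroot] using hasDerivAt_logFLD hc0 hy₀)
  refine ⟨hconc.congr fun y hy => by rw [fLD_eq_exp_logFLD ha hb hc0 hy, log_exp],
    y₀, ⟨hy₀S, (isMaxOn_fLD_iff ha hb hc0 hy₀S).2 hmax, hy₀.1, hy₀.2, hroot⟩, ?_⟩
  rintro y ⟨hy, hymax, -⟩
  exact hconc.eq_of_isMaxOn ((isMaxOn_fLD_iff ha hb hc0 hy).1 hymax) hmax hy hy₀S
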